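/- Let α ∈ (0,1), β = √(1−α²), d > 0, and k > (8α+2β)/(9(αβ)^{3/2}). If s > 0 satisfies R(s) = 0 with R(s) = √(s²+k²)·tanh(d√(s²+k²)) + α s^{3/2} − β k²/√s, then (k/2)·√(β/α) < s < k·√(β/α). -/

import Mathlib

/-!
The function `R` is strictly increasing on `(0, ∞)`: each of its three terms is monotone and
`α s^{3/2}` is strictly so. Writing `α s^{3/2} - β k² / √s = (α s² - β k²) / √s`, at
`s = k √(β/α)` these two terms cancel and `R > 0` because of the `tanh` term. At `s = (k/2) √(β/α)`,
bounding `tanh` by `1` leaves `√(s² + k²) - (3/4) β k² / √s`, which is negative exactly when `k`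
exceeds `(8α + 2β) / (9 (αβ)^{3/2})`. So a root of `R` lies strictly between these two points.
-/

open Real Set

namespace Real

theorem tanh_strictMono : StrictMono tanh := fun x y hxy => by
  rwa [← artanh_lt_artanh_iff ⟨neg_one_lt_tanh x, tanh_lt_one x⟩
    ⟨neg_one_lt_tanh y, tanh_lt_one y⟩, artanh_tanh, artanh_tanh]

theorem tanh_pos {x : ℝ} (hx : 0 < x) : 0 < tanh x :=
  tanh_zero ▸ tanh_strictMono hx

theorem tanh_nonneg {x : ℝ} (hx : 0 ≤ x) : 0 ≤ tanh x :=
  tanh_zero ▸ tanh_strictMono.monotone hx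

theorem rpow_three_halves_eq_sq_div_sqrt {x : ℝ} (hx : 0 < x) :
    x ^ ((3 : ℝ) / 2) = x ^ 2 / √x := by
  have hsqrt : 0 < √x := sqrt_pos.mpr hx
  rw [eq_div_iff hsqrt.ne', sqrt_eq_rpow, ← rpow_add hx]
  norm_num

end Real

noncomputable def dispersionRel (α β d k s : ℝ) : ℝ :=
  √(s ^ 2 + k ^ 2) * tanh (d * √(s ^ 2 + k ^ 2)) + α * s ^ ((3 : ℝ) / 2) - β * k ^ 2 / √s

section dispersionRel

variable {α β d k s : ℝ}

theorem dispersionRel_eq (hs : 0 < s) :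
    dispersionRel α β d k s =
      √(s ^ 2 + k ^ 2) * tanh (d * √(s ^ 2 + k ^ 2)) + (α * s ^ 2 - β * k ^ 2) / √s := by
  rw [dispersionRel, rpow_three_halves_eq_sq_div_sqrt hs]
  ring

theorem dispersionRel_strictMonoOn (hd : 0 ≤ d) (hα : 0 < α) (hβ : 0 ≤ β) :
    StrictMonoOn (dispersionRel α β d k) (Ioi 0) := by
  intro a (ha : 0 < a) b (hb : 0 < b) hab
  have hsqrt : √(a ^ 2 + k ^ 2) ≤ √(b ^ 2 + k ^ 2) := sqrt_le_sqrt (by nlinarith)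
  have htanh : tanh (d * √(a ^ 2 + k ^ 2)) ≤ tanh (d * √(b ^ 2 + k ^ 2)) :=
    tanh_strictMono.monotone (mul_le_mul_of_nonneg_left hsqrt hd)
  have hfirst := mul_le_mul hsqrt htanh (tanh_nonneg (by positivity)) (sqrt_nonneg _)
  have hpow : a ^ ((3 : ℝ) / 2) < b ^ ((3 : ℝ) / 2) := rpow_lt_rpow ha.le hab (by norm_num)
  have hinv : β * k ^ 2 / √b ≤ β * k ^ 2 / √a :=
    div_le_div_of_nonneg_left (by positivity) (sqrt_pos.mpr ha) (sqrt_le_sqrt hab.le)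
  unfold dispersionRel
  nlinarith

theorem dispersionRel_pos (hd : 0 < d) (hs : 0 < s) (h : β * k ^ 2 ≤ α * s ^ 2) :
    0 < dispersionRel α β d k s := by
  have hsqrt : 0 < √(s ^ 2 + k ^ 2) := sqrt_pos.mpr (by positivity)
  have hfirst := mul_pos hsqrt (tanh_pos (mul_pos hd hsqrt))
  have hsecond : 0 ≤ (α * s ^ 2 - β * k ^ 2) / √s := div_nonneg (by linarith) (sqrt_nonneg s)
  rw [dispersionRel_eq hs]
  linarith

theorem dispersionRel_neg (hs : 0 < s) (hle : α * s ^ 2 ≤ β * k ^ 2)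
    (h : (s ^ 2 + k ^ 2) * s < (β * k ^ 2 - α * s ^ 2) ^ 2) :
    dispersionRel α β d k s < 0 := by
  have hsqrt : 0 < √s := sqrt_pos.mpr hs
  have htanh : √(s ^ 2 + k ^ 2) * tanh (d * √(s ^ 2 + k ^ 2)) ≤ √(s ^ 2 + k ^ 2) :=
    mul_le_of_le_one_right (sqrt_nonneg _) (tanh_lt_one _).le
  have hbound : √(s ^ 2 + k ^ 2) * √s < β * k ^ 2 - α * s ^ 2 := by
    rw [← sqrt_mul (by positivity), sqrt_lt' (by nlinarith)]
    exact h
  have hsecond : √(s ^ 2 + k ^ 2) + (α * s ^ 2 - β * k ^ 2) / √s < 0 := by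
    rw [← lt_sub_iff_add_lt', zero_sub, div_lt_iff₀ hsqrt]
    linarith
  rw [dispersionRel_eq hs]
  linarith

end dispersionRel

theorem stmt_5 (k d α : ℝ) (hd : 0 < d) (hα0 : 0 < α) (hα1 : α < 1)
    (β : ℝ) (hβ : β = Real.sqrt (1 - α ^ 2))
    (hk : k > (8 * α + 2 * β) / (9 * (α * β) ^ ((3 : ℝ) / 2)))
    (s : ℝ) (hs : 0 < s)
    (hroot : Real.sqrt (s ^ 2 + k ^ 2) * Real.tanh (d * Real.sqrt (s ^ 2 + k ^ 2))
        + α * s ^ ((3 : ℝ) / 2) - β * k ^ 2 / Real.sqrt s = 0) :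
    k / 2 * Real.sqrt (β / α) < s ∧ s < k * Real.sqrt (β / α) := by
  have hβ0 : 0 < β := hβ ▸ sqrt_pos.mpr (by nlinarith)
  set c := √(β / α)
  have hc0 : 0 < c := sqrt_pos.mpr (div_pos hβ0 hα0)
  have hc : β = α * c ^ 2 := by rw [sq_sqrt (div_pos hβ0 hα0).le]; field_simp
  have hk' : 8 + 2 * c ^ 2 < 9 * α ^ 2 * c ^ 3 * k := by
    have hpow : (α * β) ^ ((3 : ℝ) / 2) = (α * c) ^ 3 := by
      rw [hc, show α * (α * c ^ 2) = (α * c) ^ 2 by ring, ← rpow_natCast, ← rpow_natCast,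
        ← rpow_mul (by positivity)]
      norm_num
    rw [gt_iff_lt, hpow, div_lt_iff₀ (by positivity), hc] at hk
    nlinarith
  have hk0 : 0 < k := pos_of_mul_pos_right (by nlinarith) (by positivity : 0 ≤ 9 * α ^ 2 * c ^ 3)
  have hmono := dispersionRel_strictMonoOn (k := k) hd.le hα0 hβ0.le
  have hlower : dispersionRel α β d k (k / 2 * c) < 0 := by
    refine dispersionRel_neg (by positivity) (by rw [hc]; nlinarith) ?_
    rw [hc]
    -- the two sides differ by `(k³ c / 16) (8 + 2 c² - 9 α² c³ k)`
    nlinarith [mul_lt_mul_of_pos_left hk' (by positivity : 0 < k ^ 3 * c / 16)]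
  have hupper : 0 < dispersionRel α β d k (k * c) :=
    dispersionRel_pos hd (by positivity) (le_of_eq (by rw [hc]; ring))
  rw [← dispersionRel] at hroot
  constructor
  · exact (hmono.lt_iff_lt (by positivity : (0 : ℝ) < k / 2 * c) hs).mp (by linarith)
  · exact (hmono.lt_iff_lt hs (by positivity : (0 : ℝ) < k * c)).mp (by linarith)
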